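/- arXiv:1905.07605 — 2 statements merged into one kernel-verified Lean document; each statement's English description precedes it below -/
import Mathlib

section
/- Let Γ be a countable group acting faithfully on the right by homeomorphisms on a topological space X, let U and V be disjoint nonempty open subsets of X such that Γ_{U→V} ≠ ∅, and let μ be an invariant random subgroup of Γ. Then for every finite subset A of the set of partial homeomorphisms Γ̄_{U→V}, the probability under μ that a random subgroup H satisfies H̄_{U→V} ∩ A ≠ ∅ is at most the μ-expectation of min{ |A| / [R_Γ(U) : H̄_{U→U} ∩ R_Γ(U)] , 1 } · 1_{Ω_{U,V}}(H), where Ω_{U,V} = {H ∈ Sub(Γ) : H_{U→V} ≠ ∅} and the index [R_Γ(U) : H̄_{U→U} ∩ R_Γ(U)] is computed with both groups viewed as groups of homeomorphisms of U (with the convention that |A| divided by an infinite index is 0). -/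
/-!
Write `R = R_Γ(U)`, let `L_H ≤ R` be the elements of `R` acting on `U` like an element of `H`
stabilizing `U`, and let `N(H) = [R : L_H]`. Conjugation by `r ∈ R` is compatible with both `N`
and the event `S = {H̄_{U→V} ∩ A ≠ ∅}`: `L_{rHr⁻¹} = r L_H r⁻¹`, and since `r` fixes `V`
pointwise, `rhr⁻¹` acts on `U` as `x ↦ (x·r)·h`. Count the cosets `L_H g` by their least elements
for an enumeration of `Γ` and substitute `H ↦ gHg⁻¹` using the invariance of `μ`: for every
`R`-invariant weight `W` this gives `E[1_S N W] ≤ |A| E[1_Ω W]`, because for fixed `H` the least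
elements `g` of the cosets `g L_H` with `gHg⁻¹ ∈ S` are sent injectively into `A`. The weight
`W = 1_{N = ∞}` shows that `S ∩ {N = ∞}` is null, `W = 1_{|A| ≤ N} / N` bounds the rest of `S`
where `|A| ≤ N`, and where `N < |A|` the trivial bound `S ⊆ Ω` suffices.
-/

open MeasureTheory
open scoped ENNReal

/-- The measurable structure on the space of subgroups of a group, obtained from the
product ("cylinder") σ-algebra on `Set Γ ≅ {0,1}^Γ` via the embedding `H ↦ (H : Set Γ)`. -/
instance subgroupMeasurableSpace {Γ : Type*} [Group Γ] : MeasurableSpace (Subgroup Γ) :=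
  MeasurableSpace.comap (fun H => (H : Set Γ)) inferInstance

/-- The conjugate of a subgroup `H` by a group element `g`. -/
def conjSubgroup {Γ : Type*} [Group Γ] (g : Γ) (H : Subgroup Γ) : Subgroup Γ :=
  Subgroup.map (MulAut.conj g).toMonoidHom H

/-- An invariant random subgroup: a Borel probability measure on `Sub(Γ)` invariant
under the conjugation action of `Γ`. -/
def IsIRS {Γ : Type*} [Group Γ] (μ : Measure (Subgroup Γ)) : Prop :=
  IsProbabilityMeasure μ ∧ ∀ g : Γ, μ.map (conjSubgroup g) = μ

section Cosets

variable {Γ : Type*} [Group Γ]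

theorem mem_conjSubgroup {g t : Γ} {H : Subgroup Γ} :
    t ∈ conjSubgroup g H ↔ g⁻¹ * t * g ∈ H := by
  rw [conjSubgroup, Subgroup.mem_map_equiv]
  simp [mul_assoc]

theorem conjSubgroup_inv_conjSubgroup (g : Γ) (H : Subgroup Γ) :
    conjSubgroup g⁻¹ (conjSubgroup g H) = H := by
  ext t
  simp [mem_conjSubgroup, mul_assoc]

def rightCosetOf (L : Subgroup Γ) (g : Γ) : Set Γ := {y | ∃ t ∈ L, y = t * g}

def rightCosetsIn (L R : Subgroup Γ) : Set (Set Γ) := {C | ∃ g ∈ R, C = rightCosetOf L g}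

theorem mem_rightCosetOf {L : Subgroup Γ} {g y : Γ} :
    y ∈ rightCosetOf L g ↔ y * g⁻¹ ∈ L :=
  ⟨fun ⟨t, ht, hy⟩ => by simpa [hy] using ht, fun h => ⟨y * g⁻¹, h, by group⟩⟩

theorem rightCosetOf_eq_of_mem {L : Subgroup Γ} {g y : Γ} (hy : y ∈ rightCosetOf L g) :
    rightCosetOf L y = rightCosetOf L g := by
  rw [mem_rightCosetOf] at hy
  ext z
  simp only [mem_rightCosetOf]
  constructor
  · intro hz
    simpa [mul_assoc] using L.mul_mem hz hy
  · intro hz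
    simpa [mul_assoc] using L.mul_mem hz (L.inv_mem hy)

theorem image_conj_rightCosetOf (r g : Γ) (L : Subgroup Γ) :
    (fun y => r * y * r⁻¹) '' rightCosetOf L g =
      rightCosetOf (conjSubgroup r L) (r * g * r⁻¹) := by
  ext y
  simp only [Set.mem_image, mem_rightCosetOf, mem_conjSubgroup]
  constructor
  · rintro ⟨z, hz, rfl⟩
    simpa [mul_assoc] using hz
  · intro hy
    exact ⟨r⁻¹ * y * r, by simpa [mul_assoc] using hy, by group⟩

theorem encard_rightCosetsIn_conjSubgroup {L R : Subgroup Γ} {r : Γ} (hr : r ∈ R) :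
    (rightCosetsIn (conjSubgroup r L) R).encard = (rightCosetsIn L R).encard := by
  have hinj : Function.Injective fun y => r * y * r⁻¹ := fun a b h => by simpa using h
  have himage : (Set.image fun y => r * y * r⁻¹) '' rightCosetsIn L R =
      rightCosetsIn (conjSubgroup r L) R := by
    ext C
    constructor
    · rintro ⟨_, ⟨g, hg, rfl⟩, rfl⟩
      exact ⟨r * g * r⁻¹, R.mul_mem (R.mul_mem hr hg) (R.inv_mem hr),
        image_conj_rightCosetOf r g L⟩
    · rintro ⟨g, hg, rfl⟩
      refine ⟨_, ⟨r⁻¹ * g * r, R.mul_mem (R.mul_mem (R.inv_mem hr) hg) hr, rfl⟩, ?_⟩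
      rw [image_conj_rightCosetOf]
      congr 1
      group
  rw [← himage, (Set.image_injective.mpr hinj).injOn.encard_image]

/-- The `e`-least elements of the cosets `L g`, `g ∈ R`: a transversal that, unlike an arbitrary
choice, depends measurably on `L`. -/
def minRightReps (e : Γ → ℕ) (L R : Subgroup Γ) : Set Γ :=
  {g | g ∈ R ∧ ∀ t ∈ L, e g ≤ e (t * g)}

def minLeftReps (e : Γ → ℕ) (L R : Subgroup Γ) : Set Γ :=
  {g | g ∈ R ∧ ∀ t ∈ L, e g ≤ e (g * t)}

variable {e : Γ → ℕ} {L R : Subgroup Γ}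

theorem encard_minRightReps (he : Function.Injective e) (hLR : L ≤ R) :
    (minRightReps e L R).encard = (rightCosetsIn L R).encard := by
  have himage : rightCosetOf L '' minRightReps e L R = rightCosetsIn L R := by
    ext C
    constructor
    · rintro ⟨g, hg, rfl⟩
      exact ⟨g, hg.1, rfl⟩
    · rintro ⟨g, hg, rfl⟩
      obtain ⟨y, hy, hmin⟩ := exists_minimalFor_of_wellFoundedLT (· ∈ rightCosetOf L g) e
        ⟨g, mem_rightCosetOf.mpr (by simp)⟩
      have hyR : y ∈ R := by
        simpa using R.mul_mem (hLR (mem_rightCosetOf.mp hy)) hg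
      refine ⟨y, ⟨hyR, fun t ht => ?_⟩, rightCosetOf_eq_of_mem hy⟩
      have hty : t * y ∈ rightCosetOf L g := by
        rw [← rightCosetOf_eq_of_mem hy]
        exact ⟨t, ht, rfl⟩
      exact (le_total (e y) (e (t * y))).elim id (hmin hty)
  have hinjOn : Set.InjOn (rightCosetOf L) (minRightReps e L R) := by
    intro g hg g' hg' hgg'
    have hg_mem : g ∈ rightCosetOf L g' := hgg' ▸ ⟨1, L.one_mem, (one_mul g).symm⟩
    have hg'_mem : g' ∈ rightCosetOf L g := hgg' ▸ ⟨1, L.one_mem, (one_mul g').symm⟩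
    obtain ⟨t, ht, rfl⟩ := hg_mem
    obtain ⟨t', ht', ht'g⟩ := hg'_mem
    refine he (le_antisymm ?_ (hg'.2 t ht))
    simpa [← ht'g] using hg.2 t' ht'
  rw [← himage, hinjOn.encard_image]

theorem mem_minRightReps_conjSubgroup_iff {g : Γ} :
    g ∈ minRightReps e (conjSubgroup g L) R ↔ g ∈ minLeftReps e L R := by
  refine and_congr_right fun _ => ⟨fun h t ht => ?_, fun h t ht => ?_⟩
  · simpa [mul_assoc] using h (g * t * g⁻¹) (by simpa [mem_conjSubgroup, mul_assoc] using ht)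
  · simpa [mul_assoc] using h (g⁻¹ * t * g) (mem_conjSubgroup.mp ht)

theorem eq_of_mem_minLeftReps (he : Function.Injective e) {g g' : Γ}
    (hg : g ∈ minLeftReps e L R) (hg' : g' ∈ minLeftReps e L R) (h : g⁻¹ * g' ∈ L) :
    g = g' := by
  refine he (le_antisymm ?_ ?_)
  · simpa using hg.2 _ h
  · simpa using hg'.2 _ (L.inv_mem h)

end Cosets

section RigidStabilizer

variable {Γ X : Type*} [Group Γ] [TopologicalSpace X] {ρ : Γ → X ≃ₜ X}
  (hact : ∀ g h : Γ, ∀ x : X, ρ (g * h) x = ρ h (ρ g x))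
include hact

theorem rho_one_apply (x : X) : ρ 1 x = x :=
  (ρ 1).injective (by rw [← hact, one_mul])

theorem rho_inv_apply_apply (g : Γ) (x : X) : ρ g⁻¹ (ρ g x) = x := by
  rw [← hact, mul_inv_cancel, rho_one_apply hact]

theorem rho_apply_inv_apply (g : Γ) (x : X) : ρ g (ρ g⁻¹ x) = x := by
  rw [← hact, inv_mul_cancel, rho_one_apply hact]

theorem image_rho_mul (g h : Γ) (s : Set X) : ρ (g * h) '' s = ρ h '' (ρ g '' s) := by
  rw [← Set.image_comp]
  exact Set.image_congr fun x _ => hact g h x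

theorem image_rho_inv {g : Γ} {s t : Set X} (h : ρ g '' s = t) : ρ g⁻¹ '' t = s := by
  rw [← h, ← image_rho_mul hact, mul_inv_cancel]
  exact Set.image_congr (fun x _ => rho_one_apply hact x) |>.trans (Set.image_id s)

def rigidStabilizer (U : Set X) : Subgroup Γ where
  carrier := {g | ∀ x ∉ U, ρ g x = x}
  one_mem' _ _ := rho_one_apply hact _
  mul_mem' {g h} hg hh x hx := by rw [hact, hg x hx, hh x hx]
  inv_mem' {g} hg x hx := by
    conv_lhs => rw [← hg x hx]
    exact rho_inv_apply_apply hact g x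

theorem image_rho_of_mem_rigidStabilizer {U : Set X} {r : Γ} (hr : r ∈ rigidStabilizer hact U) :
    ρ r '' U = U := by
  have hmaps : ∀ {s : Γ}, s ∈ rigidStabilizer hact U → ∀ x ∈ U, ρ s x ∈ U := by
    intro s hs x hx
    by_contra hsx
    have hfix : ρ s⁻¹ (ρ s x) = ρ s x := (rigidStabilizer hact U).inv_mem hs _ hsx
    rw [rho_inv_apply_apply hact] at hfix
    exact hsx (hfix ▸ hx)
  refine Set.Subset.antisymm (Set.image_subset_iff.mpr (hmaps hr)) fun y hy => ?_
  exact ⟨ρ r⁻¹ y, hmaps ((rigidStabilizer hact U).inv_mem hr) y hy,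
    rho_apply_inv_apply hact r y⟩

theorem rho_conj_apply (r g : Γ) (x : X) : ρ (r * g * r⁻¹) x = ρ r⁻¹ (ρ g (ρ r x)) := by
  rw [hact, hact]

theorem image_rho_conj (r g : Γ) (s : Set X) :
    ρ (r * g * r⁻¹) '' s = ρ r⁻¹ '' (ρ g '' (ρ r '' s)) := by
  rw [image_rho_mul hact, image_rho_mul hact]

/-- The preimage in `R_Γ(U)` of `H̄_{U→U} ∩ R_Γ(U)` under restriction to `U`; accordingly
`rigidIndex` is `[R_Γ(U) : H̄_{U→U} ∩ R_Γ(U)]`, counted as a number of right cosets. -/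
def rigidRestriction (U : Set X) (H : Subgroup Γ) : Subgroup Γ where
  carrier :=
    {t | t ∈ rigidStabilizer hact U ∧
      ∃ h ∈ H, ρ h '' U = U ∧ ∀ x ∈ U, ρ t x = ρ h x}
  one_mem' := ⟨one_mem _, 1, H.one_mem,
    (Set.image_congr fun x _ => rho_one_apply hact x).trans (Set.image_id U), fun _ _ => rfl⟩
  mul_mem' := by
    rintro t₁ t₂ ⟨ht₁, h₁, hh₁, hU₁, heq₁⟩ ⟨ht₂, h₂, hh₂, hU₂, heq₂⟩
    refine ⟨mul_mem ht₁ ht₂, h₁ * h₂, H.mul_mem hh₁ hh₂,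
      by rw [image_rho_mul hact, hU₁, hU₂], fun x hx => ?_⟩
    rw [hact, hact, heq₁ x hx, heq₂ _ (hU₁ ▸ Set.mem_image_of_mem _ hx)]
  inv_mem' := by
    rintro t ⟨ht, h, hh, hU, heq⟩
    have hU' := image_rho_inv hact hU
    refine ⟨inv_mem ht, h⁻¹, H.inv_mem hh, hU', fun x hx => ?_⟩
    have hy : ρ h⁻¹ x ∈ U := hU' ▸ Set.mem_image_of_mem _ hx
    rw [← rho_inv_apply_apply hact t (ρ h⁻¹ x), heq _ hy, rho_apply_inv_apply hact]

theorem rigidRestriction_le (U : Set X) (H : Subgroup Γ) :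
    rigidRestriction hact U H ≤ rigidStabilizer hact U := fun _ ht => ht.1

theorem conj_mem_rigidRestriction {U : Set X} {H : Subgroup Γ} {r t : Γ}
    (hr : r ∈ rigidStabilizer hact U) (ht : t ∈ rigidRestriction hact U H) :
    r * t * r⁻¹ ∈ rigidRestriction hact U (conjSubgroup r H) := by
  obtain ⟨htR, h, hh, hU, heq⟩ := ht
  have hrU := image_rho_of_mem_rigidStabilizer hact hr
  refine ⟨mul_mem (mul_mem hr htR) (inv_mem hr), r * h * r⁻¹,
    mem_conjSubgroup.mpr (by simpa [mul_assoc] using hh), ?_, fun x hx => ?_⟩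
  · rw [image_rho_conj hact, hrU, hU, image_rho_inv hact hrU]
  · rw [rho_conj_apply hact, rho_conj_apply hact, heq _ (hrU ▸ Set.mem_image_of_mem _ hx)]

theorem rigidRestriction_conjSubgroup {U : Set X} {H : Subgroup Γ} {r : Γ}
    (hr : r ∈ rigidStabilizer hact U) :
    rigidRestriction hact U (conjSubgroup r H) = conjSubgroup r (rigidRestriction hact U H) := by
  ext t
  rw [mem_conjSubgroup]
  constructor
  · intro ht
    simpa [conjSubgroup_inv_conjSubgroup] using conj_mem_rigidRestriction hact (inv_mem hr) ht
  · intro ht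
    simpa [mul_assoc] using conj_mem_rigidRestriction hact hr ht

noncomputable def rigidIndex (U : Set X) (H : Subgroup Γ) : ℕ∞ :=
  (rightCosetsIn (rigidRestriction hact U H) (rigidStabilizer hact U)).encard

theorem rigidIndex_conjSubgroup {U : Set X} {H : Subgroup Γ} {r : Γ}
    (hr : r ∈ rigidStabilizer hact U) :
    rigidIndex hact U (conjSubgroup r H) = rigidIndex hact U H := by
  rw [rigidIndex, rigidRestriction_conjSubgroup hact hr, encard_rightCosetsIn_conjSubgroup hr,
    rigidIndex]

theorem rigidIndex_ne_zero (U : Set X) (H : Subgroup Γ) : rigidIndex hact U H ≠ 0 :=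
  Set.encard_ne_zero.mpr ⟨_, 1, one_mem _, rfl⟩

theorem rigidIndex_eq_tsum {U : Set X} {e : Γ → ℕ} (he : Function.Injective e)
    (H : Subgroup Γ) :
    (rigidIndex hact U H : ℝ≥0∞) = ∑' g,
      (minRightReps e (rigidRestriction hact U H) (rigidStabilizer hact U)).indicator 1 g := by
  rw [rigidIndex, ← encard_minRightReps he (rigidRestriction_le hact U H),
    ← ENNReal.tsum_set_one, ← tsum_subtype]
  rfl

end RigidStabilizer

section Transfers

variable {Γ X : Type*} [Group Γ] [TopologicalSpace X]

def movingSubgroups (ρ : Γ → X ≃ₜ X) (U V : Set X) : Set (Subgroup Γ) :=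
  {H | ∃ h ∈ H, ρ h '' U = V}

def meetingSubgroups (ρ : Γ → X ≃ₜ X) (U V : Set X) (A : Set (U → X)) :
    Set (Subgroup Γ) :=
  {H | ∃ f ∈ A, ∃ h ∈ H, ρ h '' U = V ∧ f = fun x : U => ρ h x}

theorem meetingSubgroups_subset_movingSubgroups (ρ : Γ → X ≃ₜ X) (U V : Set X)
    (A : Set (U → X)) : meetingSubgroups ρ U V A ⊆ movingSubgroups ρ U V :=
  fun _ ⟨_, _, h, hh, hhU, _⟩ => ⟨h, hh, hhU⟩

variable {ρ : Γ → X ≃ₜ X} (hact : ∀ g h : Γ, ∀ x : X, ρ (g * h) x = ρ h (ρ g x))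
  {U V : Set X}
include hact

theorem image_rho_conj_of_disjoint (hUV : Disjoint U V) {r h : Γ}
    (hr : r ∈ rigidStabilizer hact U) (hh : ρ h '' U = V) : ρ (r * h * r⁻¹) '' U = V := by
  rw [image_rho_conj hact, image_rho_of_mem_rigidStabilizer hact hr, hh]
  exact (Set.image_congr fun x hx => (inv_mem hr) x (Set.disjoint_right.mp hUV hx)).trans
    (Set.image_id V)

theorem rho_conj_apply_of_disjoint (hUV : Disjoint U V) {r h : Γ}
    (hr : r ∈ rigidStabilizer hact U) (hh : ρ h '' U = V) {x : X} (hx : x ∈ U) :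
    ρ (r * h * r⁻¹) x = ρ h (ρ r x) := by
  have hrx : ρ r x ∈ U := image_rho_of_mem_rigidStabilizer hact hr ▸ Set.mem_image_of_mem _ hx
  rw [rho_conj_apply hact]
  exact (inv_mem hr) _ (Set.disjoint_right.mp hUV (hh ▸ Set.mem_image_of_mem _ hrx))

theorem exists_of_conjSubgroup_mem_meetingSubgroups (hUV : Disjoint U V) {A : Set (U → X)}
    {g : Γ} {H : Subgroup Γ}
    (hg : g ∈ rigidStabilizer hact U) (hgH : conjSubgroup g H ∈ meetingSubgroups ρ U V A) :
    ∃ f ∈ A, ∃ k ∈ H, ρ k '' U = V ∧ f = fun x : U => ρ k (ρ g x) := by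
  obtain ⟨f, hf, h, hh, hUh, rfl⟩ := hgH
  have hk : ρ (g⁻¹ * h * g) '' U = V := by
    simpa using image_rho_conj_of_disjoint hact hUV (inv_mem hg) hUh
  refine ⟨_, hf, g⁻¹ * h * g, mem_conjSubgroup.mp hh, hk, funext fun x => ?_⟩
  rw [← rho_conj_apply_of_disjoint hact hUV hg hk x.2]
  group

theorem mem_movingSubgroups_of_conjSubgroup_mem (hUV : Disjoint U V) {A : Set (U → X)}
    {g : Γ} {H : Subgroup Γ}
    (hg : g ∈ rigidStabilizer hact U) (hgH : conjSubgroup g H ∈ meetingSubgroups ρ U V A) :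
    H ∈ movingSubgroups ρ U V := by
  obtain ⟨-, -, k, hk, hkU, -⟩ := exists_of_conjSubgroup_mem_meetingSubgroups hact hUV hg hgH
  exact ⟨k, hk, hkU⟩

theorem inv_mul_mem_rigidRestriction {H : Subgroup Γ} {g g' k k' : Γ}
    (hg : g ∈ rigidStabilizer hact U) (hg' : g' ∈ rigidStabilizer hact U)
    (hk : k ∈ H) (hk' : k' ∈ H) (hkU : ρ k '' U = V) (hk'U : ρ k' '' U = V)
    (heq : ∀ x ∈ U, ρ k (ρ g x) = ρ k' (ρ g' x)) :
    g⁻¹ * g' ∈ rigidRestriction hact U H := by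
  refine ⟨mul_mem (inv_mem hg) hg', k * k'⁻¹, H.mul_mem hk (H.inv_mem hk'),
    by rw [image_rho_mul hact, hkU, image_rho_inv hact hk'U], fun x hx => ?_⟩
  have hy : ρ g⁻¹ x ∈ U :=
    image_rho_of_mem_rigidStabilizer hact (inv_mem hg) ▸ Set.mem_image_of_mem _ hx
  have := heq _ hy
  rw [rho_apply_inv_apply hact] at this
  rw [hact, hact, this, rho_inv_apply_apply hact]

theorem encard_conjSubgroup_mem_meetingSubgroups_le (hUV : Disjoint U V) {e : Γ → ℕ}
    (he : Function.Injective e) (H : Subgroup Γ) (A : Set (U → X)) :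
    {g | g ∈ minLeftReps e (rigidRestriction hact U H) (rigidStabilizer hact U) ∧
      conjSubgroup g H ∈ meetingSubgroups ρ U V A}.encard ≤ A.encard := by
  set B := {g | g ∈ minLeftReps e (rigidRestriction hact U H) (rigidStabilizer hact U) ∧
      conjSubgroup g H ∈ meetingSubgroups ρ U V A}
  have hrestr : ∀ g : B, ∃ f : A, ∃ k ∈ H, ρ k '' U = V ∧
      (f : U → X) = fun x : U => ρ k (ρ g x) := fun g => by
    obtain ⟨f, hf, hk⟩ := exists_of_conjSubgroup_mem_meetingSubgroups hact hUV g.2.1.1 g.2.2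
    exact ⟨⟨f, hf⟩, hk⟩
  choose φ k hk hkU hφ using hrestr
  refine ENat.card_le_card_of_injective (f := φ) fun g g' hgg' => Subtype.ext ?_
  refine eq_of_mem_minLeftReps he g.2.1 g'.2.1 (inv_mul_mem_rigidRestriction hact
    g.2.1.1 g'.2.1.1 (hk g) (hk g') (hkU g) (hkU g') fun x hx => ?_)
  exact congrFun ((hφ g).symm.trans ((congrArg Subtype.val hgg').trans (hφ g'))) ⟨x, hx⟩

theorem tsum_indicator_minRightReps_conjSubgroup_le (hUV : Disjoint U V) {e : Γ → ℕ}
    (he : Function.Injective e) (A : Set (U → X)) {W : Subgroup Γ → ℝ≥0∞}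
    (hWinv : ∀ r ∈ rigidStabilizer hact U, ∀ H, W (conjSubgroup r H) = W H) (H : Subgroup Γ) :
    ∑' g, (minRightReps e (rigidRestriction hact U (conjSubgroup g H))
        (rigidStabilizer hact U)).indicator
        (fun _ => (meetingSubgroups ρ U V A).indicator W (conjSubgroup g H)) g ≤
      A.encard * (movingSubgroups ρ U V).indicator W H := by
  set S := meetingSubgroups ρ U V A
  set R := rigidStabilizer hact U
  set B := {g | g ∈ minLeftReps e (rigidRestriction hact U H) R ∧ conjSubgroup g H ∈ S}
  have hB : ∀ g, (minRightReps e (rigidRestriction hact U (conjSubgroup g H)) R).indicator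
      (fun _ => S.indicator W (conjSubgroup g H)) g = B.indicator (fun _ => W H) g := by
    intro g
    by_cases hg : g ∈ R
    · have hmem : g ∈ minRightReps e (rigidRestriction hact U (conjSubgroup g H)) R ↔
          g ∈ minLeftReps e (rigidRestriction hact U H) R := by
        rw [rigidRestriction_conjSubgroup hact hg, mem_minRightReps_conjSubgroup_iff]
      by_cases h₁ : g ∈ minLeftReps e (rigidRestriction hact U H) R <;>
        by_cases h₂ : conjSubgroup g H ∈ S <;> simp [B, h₁, h₂, hmem, hWinv g hg]
    · have hψ : g ∉ minRightReps e (rigidRestriction hact U (conjSubgroup g H)) R :=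
        fun h => hg h.1
      have hgB : g ∉ B := fun h => hg h.1.1
      rw [Set.indicator_of_notMem hψ, Set.indicator_of_notMem hgB]
  rw [tsum_congr hB, ← tsum_subtype, ENNReal.tsum_set_const]
  by_cases hH : H ∈ movingSubgroups ρ U V
  · rw [Set.indicator_of_mem hH]
    gcongr
    exact encard_conjSubgroup_mem_meetingSubgroups_le hact hUV he H A
  · have hB : B = ∅ := Set.eq_empty_of_forall_notMem fun g hgB =>
      hH (mem_movingSubgroups_of_conjSubgroup_mem hact hUV hgB.1.1 hgB.2)
    simp [hB]

end Transfers

section Measurability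

variable {Γ : Type*} [Group Γ]

theorem measurable_subgroup_iff {α : Type*} [MeasurableSpace α] {f : α → Subgroup Γ} :
    Measurable f ↔ ∀ t, Measurable fun a => t ∈ f a := by
  have hcoe : Measurable f ↔ Measurable fun a => (f a : Set Γ) := by
    refine ⟨fun h => (comap_measurable _).comp h, fun h => Measurable.of_comap_le ?_⟩
    rw [subgroupMeasurableSpace, MeasurableSpace.comap_comp]
    exact h.comap_le
  rw [hcoe, measurable_set_iff]
  rfl

theorem measurable_mem_subgroup (t : Γ) : Measurable fun H : Subgroup Γ => t ∈ H :=
  measurable_subgroup_iff.mp measurable_id t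

theorem measurable_conjSubgroup (g : Γ) : Measurable (conjSubgroup g) :=
  measurable_subgroup_iff.mpr fun t => by
    simpa only [mem_conjSubgroup] using measurable_mem_subgroup (g⁻¹ * t * g)

variable [Countable Γ] {X : Type*} [TopologicalSpace X] {ρ : Γ → X ≃ₜ X}

theorem measurableSet_movingSubgroups (U V : Set X) :
    MeasurableSet (movingSubgroups ρ U V) :=
  measurableSet_setOfPred.mpr <| .exists fun h => (measurable_mem_subgroup h).and measurable_const

theorem measurableSet_meetingSubgroups (U V : Set X) (A : Set (U → X)) :
    MeasurableSet (meetingSubgroups ρ U V A) := by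
  have hswap : meetingSubgroups ρ U V A =
      {H | ∃ h, h ∈ H ∧ ρ h '' U = V ∧ (fun x : U => ρ h x) ∈ A} := by
    ext H
    constructor
    · rintro ⟨f, hf, h, hh, hhU, rfl⟩
      exact ⟨h, hh, hhU, hf⟩
    · rintro ⟨h, hh, hhU, hf⟩
      exact ⟨_, hf, h, hh, hhU, rfl⟩
  rw [hswap]
  exact measurableSet_setOfPred.mpr <| .exists fun h => (measurable_mem_subgroup h).and
    measurable_const

variable (hact : ∀ g h : Γ, ∀ x : X, ρ (g * h) x = ρ h (ρ g x)) (U : Set X)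
include hact

theorem measurable_mem_rigidRestriction (t : Γ) :
    Measurable fun H => t ∈ rigidRestriction hact U H :=
  measurable_const.and <| .exists fun h => (measurable_mem_subgroup h).and measurable_const

theorem measurable_mem_minRightReps (e : Γ → ℕ) (g : Γ) :
    Measurable fun H => g ∈ minRightReps e (rigidRestriction hact U H) (rigidStabilizer hact U) :=
  measurable_const.and <| .forall fun t =>
    (measurable_mem_rigidRestriction hact U t).imp measurable_const

theorem measurable_rigidIndex : Measurable fun H => (rigidIndex hact U H : ℝ≥0∞) := by
  obtain ⟨e, he⟩ := Countable.exists_injective_nat Γ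
  rw [funext (rigidIndex_eq_tsum hact he)]
  exact Measurable.tsum fun g => Measurable.ite
    (measurableSet_setOfPred.mpr (measurable_mem_minRightReps hact U e g)) measurable_const
    measurable_const

end Measurability

section MassTransport

variable {Γ : Type*} [Group Γ] [Countable Γ] {μ : Measure (Subgroup Γ)}

theorem lintegral_tsum_comp_conjSubgroup (hμ : ∀ g : Γ, μ.map (conjSubgroup g) = μ)
    {F : Γ → Subgroup Γ → ℝ≥0∞} (hF : ∀ g, Measurable (F g)) :
    ∫⁻ H, ∑' g, F g H ∂μ = ∫⁻ H, ∑' g, F g (conjSubgroup g H) ∂μ := by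
  rw [lintegral_tsum fun g => (hF g).aemeasurable,
    lintegral_tsum (f := fun g H => F g (conjSubgroup g H))
      fun g => ((hF g).comp (measurable_conjSubgroup g)).aemeasurable]
  exact tsum_congr fun g =>
    ((MeasurePreserving.lintegral_comp ⟨measurable_conjSubgroup g, hμ g⟩ (hF g))).symm

variable {X : Type*} [TopologicalSpace X] {ρ : Γ → X ≃ₜ X}
  (hact : ∀ g h : Γ, ∀ x : X, ρ (g * h) x = ρ h (ρ g x)) {U V : Set X}
include hact

theorem lintegral_indicator_rigidIndex_mul_le (hUV : Disjoint U V)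
    (hμ : ∀ g : Γ, μ.map (conjSubgroup g) = μ) (A : Set (U → X))
    {W : Subgroup Γ → ℝ≥0∞} (hW : Measurable W)
    (hWinv : ∀ r ∈ rigidStabilizer hact U, ∀ H, W (conjSubgroup r H) = W H) :
    ∫⁻ H, (meetingSubgroups ρ U V A).indicator (fun H => rigidIndex hact U H * W H) H ∂μ ≤
      A.encard * ∫⁻ H, (movingSubgroups ρ U V).indicator W H ∂μ := by
  obtain ⟨e, he⟩ := Countable.exists_injective_nat Γ
  set S := meetingSubgroups ρ U V A
  let F : Γ → Subgroup Γ → ℝ≥0∞ := fun g H =>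
    (minRightReps e (rigidRestriction hact U H) (rigidStabilizer hact U)).indicator
      (fun _ => S.indicator W H) g
  have hF : ∀ g, Measurable (F g) := fun g =>
    Measurable.ite (measurableSet_setOfPred.mpr (measurable_mem_minRightReps hact U e g))
      (hW.indicator (measurableSet_meetingSubgroups U V A)) measurable_const
  have hsum : ∀ H, S.indicator (fun H => rigidIndex hact U H * W H) H = ∑' g, F g H := by
    intro H
    rw [Set.indicator_mul_right, ← tsum_subtype, ENNReal.tsum_set_const,
      encard_minRightReps he (rigidRestriction_le hact U H), rigidIndex]
  calc ∫⁻ H, S.indicator (fun H => rigidIndex hact U H * W H) H ∂μ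
      = ∫⁻ H, ∑' g, F g (conjSubgroup g H) ∂μ := by
        rw [lintegral_congr hsum, lintegral_tsum_comp_conjSubgroup hμ hF]
    _ ≤ ∫⁻ H, A.encard * (movingSubgroups ρ U V).indicator W H ∂μ :=
        lintegral_mono (tsum_indicator_minRightReps_conjSubgroup_le hact hUV he A hWinv)
    _ = A.encard * ∫⁻ H, (movingSubgroups ρ U V).indicator W H ∂μ :=
        lintegral_const_mul _ (hW.indicator (measurableSet_movingSubgroups U V))

end MassTransport

section Averaging

open Set

theorem one_le_mul_indicator_inv_add_indicator {a n : ℝ≥0∞} (hn0 : n ≠ 0) (hn : n ≠ ⊤) :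
    1 ≤ n * (Ici a).indicator (·⁻¹) n + (Iio a).indicator 1 n := by
  rcases lt_or_ge n a with hlt | hle
  · simp [hlt]
  · simp [hle, ENNReal.mul_inv_cancel hn0 hn]

theorem mul_indicator_inv_add_indicator_le_min {a n : ℝ≥0∞} (ha : a ≠ ⊤) (hn0 : n ≠ 0) :
    a * (Ici a).indicator (·⁻¹) n + (Iio a).indicator 1 n ≤ min (a / n) 1 := by
  rcases lt_or_ge n a with hlt | hle
  · have h1 : 1 ≤ a / n := by
      rw [ENNReal.le_div_iff_mul_le (Or.inl hn0) (Or.inr ha), one_mul]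
      exact hlt.le
    simp [hlt, hlt.not_ge, h1]
  · have h1 : a / n ≤ 1 := ENNReal.div_le_of_le_mul (by rwa [one_mul])
    simpa [hle, hle.not_gt, div_eq_mul_inv] using h1

variable {α : Type*} [MeasurableSpace α] {μ : Measure α}

theorem measure_le_lintegral_indicator_min_div [IsFiniteMeasure μ] {S Ω : Set α}
    (hS : MeasurableSet S) (hSΩ : S ⊆ Ω) {N : α → ℝ≥0∞} (hN : Measurable N)
    (hN0 : ∀ x, N x ≠ 0) {a : ℝ≥0∞} (ha : a ≠ ⊤)
    (hexch : ∀ φ : ℝ≥0∞ → ℝ≥0∞, Measurable φ →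
      ∫⁻ x, S.indicator (fun x => N x * φ (N x)) x ∂μ ≤
        a * ∫⁻ x, Ω.indicator (fun x => φ (N x)) x ∂μ) :
    μ S ≤ ∫⁻ x, Ω.indicator (fun x => min (a / N x) 1) x ∂μ := by
  -- With `φ = 1_{⊤}` the left side is `⊤ · μ(S ∩ {N = ⊤})` and the right side is finite.
  have hfin : ∀ᵐ x ∂μ, x ∈ S → N x ≠ ⊤ := by
    have hmeas : Measurable (({⊤} : Set ℝ≥0∞).indicator (1 : ℝ≥0∞ → ℝ≥0∞)) :=
      measurable_one.indicator (measurableSet_singleton ⊤)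
    have hΩfin : ∫⁻ x, Ω.indicator (fun x => ({⊤} : Set ℝ≥0∞).indicator 1 (N x)) x ∂μ < ⊤ :=
      (lintegral_mono fun x => indicator_le (fun _ _ => indicator_le (fun _ _ => le_rfl) _)
        x).trans_lt (lintegral_const_lt_top (μ := μ) ENNReal.one_ne_top)
    filter_upwards [ae_lt_top ((hN.mul (hmeas.comp hN)).indicator hS)
      ((hexch _ hmeas).trans_lt (ENNReal.mul_lt_top ha.lt_top hΩfin)).ne] with x hx hxS hNx
    simp [hxS, hNx] at hx
  set φ : ℝ≥0∞ → ℝ≥0∞ := (Ici a).indicator (·⁻¹)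
  set χ : ℝ≥0∞ → ℝ≥0∞ := (Iio a).indicator 1
  have hφ : Measurable φ := measurable_inv.indicator measurableSet_Ici
  have hcover : ∀ᵐ x ∂μ, S.indicator 1 x ≤
      S.indicator (fun x => N x * φ (N x)) x + Ω.indicator (fun x => χ (N x)) x := by
    filter_upwards [hfin] with x hx
    by_cases hxS : x ∈ S
    · rw [indicator_of_mem hxS, indicator_of_mem hxS, indicator_of_mem (hSΩ hxS)]
      exact one_le_mul_indicator_inv_add_indicator (hN0 x) (hx hxS)
    · simp [hxS]
  have hmin : ∀ x, a * Ω.indicator (fun x => φ (N x)) x + Ω.indicator (fun x => χ (N x)) x ≤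
      Ω.indicator (fun x => min (a / N x) 1) x := by
    intro x
    by_cases hxΩ : x ∈ Ω
    · simp only [indicator_of_mem hxΩ]
      exact mul_indicator_inv_add_indicator_le_min ha (hN0 x)
    · simp [hxΩ]
  calc μ S = ∫⁻ x, S.indicator 1 x ∂μ := (lintegral_indicator_one hS).symm
    _ ≤ ∫⁻ x, S.indicator (fun x => N x * φ (N x)) x +
          Ω.indicator (fun x => χ (N x)) x ∂μ :=
        lintegral_mono_ae hcover
    _ = ∫⁻ x, S.indicator (fun x => N x * φ (N x)) x ∂μ +
          ∫⁻ x, Ω.indicator (fun x => χ (N x)) x ∂μ :=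
        lintegral_add_left ((hN.mul (hφ.comp hN)).indicator hS) _
    _ ≤ a * ∫⁻ x, Ω.indicator (fun x => φ (N x)) x ∂μ +
          ∫⁻ x, Ω.indicator (fun x => χ (N x)) x ∂μ := by gcongr; exact hexch φ hφ
    _ ≤ ∫⁻ x, a * Ω.indicator (fun x => φ (N x)) x +
          Ω.indicator (fun x => χ (N x)) x ∂μ := by
        rw [← lintegral_const_mul' _ _ ha]
        exact le_lintegral_add _ _
    _ ≤ ∫⁻ x, Ω.indicator (fun x => min (a / N x) 1) x ∂μ := lintegral_mono hmin

end Averaging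

theorem stmt1_general {Γ X : Type*} [Group Γ] [Countable Γ] [TopologicalSpace X]
    (ρ : Γ → (X ≃ₜ X)) (hact : ∀ g h : Γ, ∀ x : X, ρ (g * h) x = ρ h (ρ g x))
    (U V : Set X) (hUV : Disjoint U V)
    (μ : Measure (Subgroup Γ)) (hμ : IsIRS μ)
    (A : Set (U → X)) (hAfin : A.Finite) :
    μ {H : Subgroup Γ | ∃ f ∈ A, ∃ h ∈ H, ρ h '' U = V ∧ f = fun x : U => ρ h x} ≤
      ∫⁻ H, Set.indicator {H' : Subgroup Γ | ∃ h ∈ H', ρ h '' U = V}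
        (fun H' : Subgroup Γ =>
          min ((A.encard : ℝ≥0∞) /
            ((Set.encard
              {C : Set Γ | ∃ g : Γ, (∀ x ∉ U, ρ g x = x) ∧
                C = {y : Γ | ∃ t : Γ,
                    ((∀ x ∉ U, ρ t x = x) ∧
                      ∃ h ∈ H', ρ h '' U = U ∧ ∀ x ∈ U, ρ t x = ρ h x) ∧
                    y = t * g}} : ℝ≥0∞)))
          1) H ∂μ := by
  have := hμ.1
  have hN := measurable_rigidIndex hact U
  refine measure_le_lintegral_indicator_min_div (S := meetingSubgroups ρ U V A)
    (Ω := movingSubgroups ρ U V) (measurableSet_meetingSubgroups U V A)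
    (meetingSubgroups_subset_movingSubgroups ρ U V A) hN
    (fun H => by simpa using rigidIndex_ne_zero hact U H)
    (by simpa using hAfin.encard_lt_top.ne) fun φ hφ => ?_
  refine lintegral_indicator_rigidIndex_mul_le hact hUV hμ.2 A (hφ.comp hN) fun r hr H => ?_
  rw [rigidIndex_conjSubgroup hact hr]

theorem stmt1 {Γ X : Type*} [Group Γ] [Countable Γ] [TopologicalSpace X]
    (ρ : Γ → (X ≃ₜ X)) (hact : ∀ g h : Γ, ∀ x : X, ρ (g * h) x = ρ h (ρ g x))
    (hfaith : Function.Injective ρ)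
    (U V : Set X) (hUo : IsOpen U) (hVo : IsOpen V)
    (hUne : U.Nonempty) (hVne : V.Nonempty) (hUV : Disjoint U V)
    (hΓUV : ∃ g : Γ, ρ g '' U = V)
    (μ : Measure (Subgroup Γ)) (hμ : IsIRS μ)
    (A : Set (U → X)) (hAfin : A.Finite)
    (hA : ∀ f ∈ A, ∃ g : Γ, ρ g '' U = V ∧ f = fun x : U => ρ g x) :
    μ {H : Subgroup Γ | ∃ f ∈ A, ∃ h ∈ H, ρ h '' U = V ∧ f = fun x : U => ρ h x} ≤
      ∫⁻ H, Set.indicator {H' : Subgroup Γ | ∃ h ∈ H', ρ h '' U = V}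
        (fun H' : Subgroup Γ =>
          min ((A.encard : ℝ≥0∞) /
            ((Set.encard
              {C : Set Γ | ∃ g : Γ, (∀ x ∉ U, ρ g x = x) ∧
                C = {y : Γ | ∃ t : Γ,
                    ((∀ x ∉ U, ρ t x = x) ∧
                      ∃ h ∈ H', ρ h '' U = U ∧ ∀ x ∈ U, ρ t x = ρ h x) ∧
                    y = t * g}} : ℝ≥0∞)))
          1) H ∂μ :=
  stmt1_general ρ hact U V hUV μ hμ A hAfin
end

section
/- Let X be a finite set, let σ be a uniformly random permutation of X, and let U and K be nonempty subsets of X with U ≠ X; write p = |U|/|X| and k = |K|. Then for every x > 0 with p + x < 1, P(|(K·σ) ∩ U| > (p+x)k) ≤ exp(−H(p+x‖p)·k), and for every x with 0 < x < p, P(|(K·σ) ∩ U| < (p−x)k) ≤ exp(−H(p−x‖p)·k). -/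
/-!
Write `N σ = #((K·σ) ∩ U)`. Expanding `(1 + y) ^ N σ` as the sum over `S ⊆ K` of `y ^ #S` times
the indicator of `S·σ ⊆ U`, and using that the image of a fixed `i`-set under a random permutation
lies in `U` with probability `C(#U, i) / C(#X, i) ≤ p ^ i`, the moment generating function of `N`
is at most that of the binomial distribution `Bin(k, p)`. Markov's inequality at the optimal
exponential tilt then gives the upper tail, and the lower tail is the upper tail for `Uᶜ`.
-/

/-- The relative entropy (Kullback–Leibler divergence) `H(q‖p)` between Bernoulli
distributions with parameters `q` and `p`. -/
noncomputable def relEntropy (q p : ℝ) : ℝ :=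
  q * Real.log (q / p) + (1 - q) * Real.log ((1 - q) / (1 - p))

open Finset Real Equiv

lemma Nat.descFactorial_mul_pow_le {u n : ℕ} (h : u ≤ n) (i : ℕ) :
    u.descFactorial i * n ^ i ≤ u ^ i * n.descFactorial i := by
  induction i with
  | zero => simp
  | succ i ih =>
    have hstep : (u - i) * n ≤ u * (n - i) := by
      rw [Nat.sub_mul, Nat.mul_sub]
      exact Nat.sub_le_sub_left (by rw [mul_comm i]; exact Nat.mul_le_mul_right i h) _
    calc u.descFactorial (i + 1) * n ^ (i + 1)
        = ((u - i) * n) * (u.descFactorial i * n ^ i) := by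
          rw [Nat.descFactorial_succ, pow_succ]; ring
      _ ≤ (u * (n - i)) * (u ^ i * n.descFactorial i) := Nat.mul_le_mul hstep ih
      _ = u ^ (i + 1) * n.descFactorial (i + 1) := by
          rw [Nat.descFactorial_succ, pow_succ]; ring

lemma Nat.choose_mul_pow_le {u n : ℕ} (h : u ≤ n) (i : ℕ) :
    u.choose i * n ^ i ≤ u ^ i * n.choose i := by
  have := Nat.descFactorial_mul_pow_le h i
  rw [Nat.descFactorial_eq_factorial_mul_choose, Nat.descFactorial_eq_factorial_mul_choose,
    mul_assoc, mul_left_comm (u ^ i)] at this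
  exact Nat.le_of_mul_le_mul_left this i.factorial_pos

section PermCount

variable {X : Type*} [DecidableEq X]

lemma exists_perm_image_eq {s t : Finset X} (h : #s = #t) :
    ∃ τ : Perm X, s.image τ = t := by
  obtain ⟨τ, hτ⟩ := Perm.exists_map_finset_eq s t h
  exact ⟨τ, by rwa [map_eq_image] at hτ⟩

lemma card_image_inter_eq_card_filter (σ : Perm X) (K U : Finset X) :
    #(K.image σ ∩ U) = #{a ∈ K | σ a ∈ U} := by
  rw [← filter_mem_eq_inter, filter_image, card_image_of_injective _ σ.injective]

variable [Fintype X]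

lemma card_perm_image_eq_congr (A : Finset X) {B B' : Finset X} (h : #B = #B') :
    #{σ : Perm X | A.image σ = B} = #{σ : Perm X | A.image σ = B'} := by
  obtain ⟨τ, hτ⟩ := exists_perm_image_eq h
  refine card_equiv (Equiv.mulLeft τ) fun σ => ?_
  simp only [mem_filter, mem_univ, true_and, coe_mulLeft, Perm.coe_mul, ← image_image, ← hτ]
  exact (image_injective τ.injective).eq_iff.symm

lemma card_perm_image_eq_mul_choose {A B : Finset X} (h : #A = #B) :
    #{σ : Perm X | A.image σ = B} * (Fintype.card X).choose #A = Fintype.card (Perm X) := by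
  have hmaps : ∀ σ ∈ (univ : Finset (Perm X)), A.image σ ∈ powersetCard #A (univ : Finset X) :=
    fun σ _ => by simp [card_image_of_injective _ σ.injective]
  rw [← card_univ (α := Perm X), card_eq_sum_card_fiberwise hmaps,
    sum_congr rfl fun B' hB' => card_perm_image_eq_congr A ((mem_powersetCard.1 hB').2.trans h),
    sum_const, card_powersetCard, card_univ, smul_eq_mul, mul_comm]

lemma card_perm_image_subset_mul_choose (A U : Finset X) :
    #{σ : Perm X | A.image σ ⊆ U} * (Fintype.card X).choose #A
      = (#U).choose #A * Fintype.card (Perm X) := by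
  have hmaps : ∀ σ ∈ ({σ : Perm X | A.image σ ⊆ U} : Finset (Perm X)),
      A.image σ ∈ powersetCard #A U :=
    fun σ hσ => mem_powersetCard.2 ⟨(mem_filter.1 hσ).2, card_image_of_injective _ σ.injective⟩
  rw [card_eq_sum_card_fiberwise hmaps, sum_mul, sum_const_nat fun B hB => ?_, card_powersetCard]
  rw [filter_filter, filter_congr fun σ _ => and_iff_right_of_imp fun h =>
    h ▸ (mem_powersetCard.1 hB).1]
  exact card_perm_image_eq_mul_choose (mem_powersetCard.1 hB).2.symm

lemma card_perm_image_subset_mul_pow_le (A U : Finset X) :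
    #{σ : Perm X | A.image σ ⊆ U} * (Fintype.card X) ^ #A
      ≤ #U ^ #A * Fintype.card (Perm X) := by
  set n := Fintype.card X
  have hA : #A ≤ n := card_le_univ A
  refine Nat.le_of_mul_le_mul_right ?_ (Nat.choose_pos hA)
  calc #{σ : Perm X | A.image σ ⊆ U} * n ^ #A * n.choose #A
      = (#U).choose #A * n ^ #A * Fintype.card (Perm X) := by
        rw [mul_right_comm, card_perm_image_subset_mul_choose]; ring
    _ ≤ #U ^ #A * n.choose #A * Fintype.card (Perm X) :=
        Nat.mul_le_mul_right _ (Nat.choose_mul_pow_le (card_le_univ U) _)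
    _ = _ := by ring

lemma card_perm_image_subset_le [Nonempty X] (A U : Finset X) :
    (#{σ : Perm X | A.image σ ⊆ U} : ℝ)
      ≤ ((#U : ℝ) / Fintype.card X) ^ #A * Fintype.card (Perm X) := by
  rw [div_pow, div_mul_eq_mul_div, le_div_iff₀ (by positivity)]
  exact_mod_cast card_perm_image_subset_mul_pow_le A U

lemma pow_card_image_inter_eq_sum (σ : Perm X) (K U : Finset X) (y : ℝ) :
    (1 + y) ^ #(K.image σ ∩ U) = ∑ S ∈ K.powerset, if S.image σ ⊆ U then y ^ #S else 0 := by
  calc (1 + y) ^ #(K.image σ ∩ U) = ∏ a ∈ K, (1 + if σ a ∈ U then y else 0) := by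
        rw [card_image_inter_eq_card_filter, ← prod_const, prod_filter]
        exact prod_congr rfl fun a _ => by split_ifs <;> simp
    _ = ∑ S ∈ K.powerset, ∏ a ∈ S, if σ a ∈ U then y else 0 := prod_one_add K
    _ = _ := sum_congr rfl fun S _ => by simp only [prod_ite_zero, prod_const, image_subset_iff]

lemma sum_pow_card_image_inter_le [Nonempty X] (K U : Finset X) {y : ℝ} (hy : 0 ≤ y) :
    ∑ σ : Perm X, (1 + y) ^ #(K.image σ ∩ U)
      ≤ Fintype.card (Perm X) * (1 + (#U : ℝ) / Fintype.card X * y) ^ #K := by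
  set p : ℝ := (#U : ℝ) / Fintype.card X
  calc ∑ σ : Perm X, (1 + y) ^ #(K.image σ ∩ U)
      = ∑ S ∈ K.powerset, y ^ #S * #{σ : Perm X | S.image σ ⊆ U} := by
        simp only [pow_card_image_inter_eq_sum]
        rw [sum_comm]
        refine sum_congr rfl fun S _ => ?_
        rw [← sum_filter, sum_const, nsmul_eq_mul, mul_comm]
    _ ≤ ∑ S ∈ K.powerset, y ^ #S * (p ^ #S * Fintype.card (Perm X)) := by
        gcongr with S
        exact card_perm_image_subset_le S U
    _ = Fintype.card (Perm X) * ∏ _a ∈ K, (1 + p * y) := by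
        rw [prod_one_add, mul_sum]
        refine sum_congr rfl fun S _ => ?_
        rw [prod_const, mul_pow]
        ring
    _ = _ := by rw [prod_const]

end PermCount

theorem card_filter_lt_le_of_sum_pow_le {ι : Type*} (s : Finset ι) (f : ι → ℕ) (k : ℕ)
    {p q : ℝ} (hp : 0 < p) (hpq : p < q) (hq : q < 1)
    (hmgf : ∀ y : ℝ, 0 ≤ y → ∑ i ∈ s, (1 + y) ^ f i ≤ #s * (1 + p * y) ^ k) :
    (#{i ∈ s | q * k < f i} : ℝ) ≤ #s * exp (-(relEntropy q p * k)) := by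
  have h1q : 0 < 1 - q := by linarith
  have h1p : 0 < 1 - p := by linarith
  set a := log (q / p)
  set b := log ((1 - q) / (1 - p))
  have ha : 0 < a := log_pos ((one_lt_div hp).2 hpq)
  have hb : b < 0 := log_neg (by positivity) ((div_lt_one h1p).2 (by linarith))
  have hH : relEntropy q p = q * a + (1 - q) * b := rfl
  -- the tilt minimizing the Chernoff bound for `Bin(k, p)`
  set t := a - b
  have ht : 0 ≤ t := by linarith
  have htilt : 1 + p * (exp t - 1) = exp (-b) := by
    rw [exp_sub, exp_neg, exp_log (div_pos (hp.trans hpq) hp), exp_log (by positivity)]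
    field_simp
    ring
  have hmarkov : (#{i ∈ s | q * k < f i} : ℝ) * exp (t * (q * k)) ≤ ∑ i ∈ s, exp t ^ f i := by
    calc (#{i ∈ s | q * k < f i} : ℝ) * exp (t * (q * k))
        = ∑ i ∈ s with q * k < f i, exp (t * (q * k)) := by rw [sum_const, nsmul_eq_mul]
      _ ≤ ∑ i ∈ s with q * k < f i, exp t ^ f i := sum_le_sum fun i hi => by
          rw [← exp_nat_mul, mul_comm (f i : ℝ)]
          exact exp_le_exp.2 (mul_le_mul_of_nonneg_left (mem_filter.1 hi).2.le ht)
      _ ≤ ∑ i ∈ s, exp t ^ f i := sum_le_sum_of_subset_of_nonneg (filter_subset _ _)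
          fun _ _ _ => by positivity
  have hbound := hmarkov.trans <| by
    simpa [htilt] using hmgf (exp t - 1) (by simpa using one_le_exp ht)
  rw [← le_div_iff₀ (exp_pos _), ← exp_nat_mul, mul_div_assoc, ← exp_sub] at hbound
  refine hbound.trans_eq ?_
  rw [hH]
  congr 2
  ring

lemma relEntropy_one_sub (q p : ℝ) : relEntropy (1 - q) (1 - p) = relEntropy q p := by
  simp only [relEntropy, sub_sub_cancel]
  ring

section Tails

variable {X : Type*} [Fintype X] [DecidableEq X]

theorem card_upper_tail_le (U K : Finset X) (hU : U.Nonempty) {q : ℝ}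
    (hpq : (#U : ℝ) / Fintype.card X < q) (hq : q < 1) :
    (#{σ : Perm X | q * #K < #(K.image σ ∩ U)} : ℝ)
      ≤ Fintype.card (Perm X) * exp (-(relEntropy q ((#U : ℝ) / Fintype.card X) * #K)) := by
  have : Nonempty X := hU.to_type.map (↑)
  have hp : 0 < (#U : ℝ) / Fintype.card X := div_pos (by exact_mod_cast hU.card_pos) (by positivity)
  simpa using card_filter_lt_le_of_sum_pow_le univ (fun σ : Perm X => #(K.image σ ∩ U)) #K hp hpq
    hq fun y hy => by simpa using sum_pow_card_image_inter_le K U hy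

lemma card_compl_div_card (U : Finset X) [Nonempty X] :
    (#Uᶜ : ℝ) / Fintype.card X = 1 - (#U : ℝ) / Fintype.card X := by
  rw [card_compl, Nat.cast_sub (card_le_univ U), sub_div, div_self (by positivity)]

lemma card_image_inter_compl (σ : Perm X) (K U : Finset X) :
    (#(K.image σ ∩ Uᶜ) : ℝ) = #K - #(K.image σ ∩ U) := by
  rw [← sdiff_eq_inter_compl, eq_sub_iff_add_eq, ← Nat.cast_add, card_sdiff_add_card_inter,
    card_image_of_injective _ σ.injective]

theorem card_lower_tail_le (U K : Finset X) (hUX : U ≠ univ) {q : ℝ} (hq : 0 < q)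
    (hqp : q < (#U : ℝ) / Fintype.card X) :
    (#{σ : Perm X | #(K.image σ ∩ U) < q * #K} : ℝ)
      ≤ Fintype.card (Perm X) * exp (-(relEntropy q ((#U : ℝ) / Fintype.card X) * #K)) := by
  have hUc : Uᶜ.Nonempty := nonempty_iff_ne_empty.2 (compl_eq_empty_iff _ |>.not.2 hUX)
  have : Nonempty X := hUc.to_type.map (↑)
  have hcompl := card_upper_tail_le Uᶜ K hUc (q := 1 - q)
    (by rw [card_compl_div_card]; linarith) (by linarith)
  rw [card_compl_div_card, relEntropy_one_sub] at hcompl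
  have hevent : univ.filter (fun σ : Perm X => #(K.image σ ∩ U) < q * #K)
      = univ.filter fun σ : Perm X => (1 - q) * #K < #(K.image σ ∩ Uᶜ) :=
    filter_congr fun σ _ => by rw [card_image_inter_compl]; constructor <;> intro h <;> linarith
  rwa [hevent]

end Tails

theorem stmt5_general {X : Type*} [Fintype X] [DecidableEq X]
    (U K : Finset X) (hU : U.Nonempty) (hUX : U ≠ Finset.univ) :
    (∀ x : ℝ, 0 < x → (U.card : ℝ) / (Fintype.card X : ℝ) + x < 1 →
      (Nat.card {σ : Equiv.Perm X |
          ((U.card : ℝ) / (Fintype.card X : ℝ) + x) * (K.card : ℝ) <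
            ((K.image ⇑σ ∩ U).card : ℝ)} : ℝ) /
          (Fintype.card (Equiv.Perm X) : ℝ) ≤
        Real.exp (-(relEntropy ((U.card : ℝ) / (Fintype.card X : ℝ) + x)
          ((U.card : ℝ) / (Fintype.card X : ℝ)) * (K.card : ℝ)))) ∧
    (∀ x : ℝ, 0 < x → x < (U.card : ℝ) / (Fintype.card X : ℝ) →
      (Nat.card {σ : Equiv.Perm X |
          ((K.image ⇑σ ∩ U).card : ℝ) <
            ((U.card : ℝ) / (Fintype.card X : ℝ) - x) * (K.card : ℝ)} : ℝ) /
          (Fintype.card (Equiv.Perm X) : ℝ) ≤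
        Real.exp (-(relEntropy ((U.card : ℝ) / (Fintype.card X : ℝ) - x)
          ((U.card : ℝ) / (Fintype.card X : ℝ)) * (K.card : ℝ)))) := by
  simp only [Nat.card_eq_card_toFinset, Set.toFinset_ofPred]
  refine ⟨fun x hx hx1 => ?_, fun x hx hxp => ?_⟩
  · rw [div_le_iff₀' (by positivity)]
    exact card_upper_tail_le U K hU (by linarith) hx1
  · rw [div_le_iff₀' (by positivity)]
    exact card_lower_tail_le U K hUX (by linarith) (by linarith)

theorem stmt5 {X : Type*} [Fintype X] [DecidableEq X]
    (U K : Finset X) (hU : U.Nonempty) (hK : K.Nonempty) (hUX : U ≠ Finset.univ) :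
    (∀ x : ℝ, 0 < x → (U.card : ℝ) / (Fintype.card X : ℝ) + x < 1 →
      (Nat.card {σ : Equiv.Perm X |
          ((U.card : ℝ) / (Fintype.card X : ℝ) + x) * (K.card : ℝ) <
            ((K.image ⇑σ ∩ U).card : ℝ)} : ℝ) /
          (Fintype.card (Equiv.Perm X) : ℝ) ≤
        Real.exp (-(relEntropy ((U.card : ℝ) / (Fintype.card X : ℝ) + x)
          ((U.card : ℝ) / (Fintype.card X : ℝ)) * (K.card : ℝ)))) ∧
    (∀ x : ℝ, 0 < x → x < (U.card : ℝ) / (Fintype.card X : ℝ) →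
      (Nat.card {σ : Equiv.Perm X |
          ((K.image ⇑σ ∩ U).card : ℝ) <
            ((U.card : ℝ) / (Fintype.card X : ℝ) - x) * (K.card : ℝ)} : ℝ) /
          (Fintype.card (Equiv.Perm X) : ℝ) ≤
        Real.exp (-(relEntropy ((U.card : ℝ) / (Fintype.card X : ℝ) - x)
          ((U.card : ℝ) / (Fintype.card X : ℝ)) * (K.card : ℝ)))) :=
  stmt5_general U K hU hUX
end
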